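/- For fixed d ≥ 3, with exp(d,h) the exponent of G(d,h) and η(r,s) := lcm{r^n − 1 : 1 ≤ n ≤ s}, the bounds η(d−1, h+1) ≤ exp(d,h) ≤ d·(d−1)^h·η(d−1, h+1) hold for all h ≥ 1. -/

import Mathlib

namespace SandpileTree

/-- Vertices of the rooted `d`-regular tree of depth `h`: a depth `n ≤ h` together with
the path of steps from the root, padded with value `0` beyond the depth.
The step out of the root has `d` choices; each later step has `d - 1` choices. -/
def Vert (d h : ℕ) : Type :=
  {p : Fin (h + 1) × (Fin h → Fin d) //
    (∀ i : Fin h, (p.1 : ℕ) ≤ (i : ℕ) → (p.2 i : ℕ) = 0) ∧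
    (∀ i : Fin h, 0 < (i : ℕ) → (i : ℕ) < (p.1 : ℕ) → (p.2 i : ℕ) < d - 1)}

instance (d h : ℕ) : DecidableEq (Vert d h) := by unfold Vert; infer_instance
instance (d h : ℕ) : Fintype (Vert d h) := by unfold Vert; infer_instance

/-- The depth (distance from the root) of a vertex. -/
def depth {d h : ℕ} (v : Vert d h) : ℕ := (v.1.1 : ℕ)

/-- The root of the tree. -/
def root (d h : ℕ) (hd : 0 < d) : Vert d h :=
  ⟨(0, fun _ => ⟨0, hd⟩), by constructor <;> intro i <;> simp⟩

/-- `IsParent i j` means that `i` is the parent of `j` in the rooted tree. -/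
def IsParent {d h : ℕ} (i j : Vert d h) : Prop :=
  depth j = depth i + 1 ∧ ∀ k : Fin h, (k : ℕ) < depth i → j.1.2 k = i.1.2 k

instance {d h : ℕ} (i j : Vert d h) : Decidable (IsParent i j) := by
  unfold IsParent; infer_instance

/-- The row of the reduced Laplacian of the augmented tree corresponding to vertex `i`:
`δ i = d·x_i − x_{parent i} − ∑_{j child of i} x_j` (no parent term for the root, and
no children terms for the leaves, which are attached to the sink by `d-1` edges). -/
def delta (d h : ℕ) (i : Vert d h) : Vert d h → ℤ :=
  (d : ℤ) • Pi.single i 1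
    - ∑ j ∈ Finset.univ.filter (fun j => IsParent j i), Pi.single j 1
    - ∑ j ∈ Finset.univ.filter (fun j => IsParent i j), Pi.single j 1

/-- The lattice `Λ ⊆ ℤ^V` spanned by the rows of the reduced Laplacian. -/
def lat (d h : ℕ) : AddSubgroup (Vert d h → ℤ) :=
  AddSubgroup.closure (Set.range (delta d h))

/-- The sandpile group `G(d,h) = ℤ^V / Λ` of the `d`-regular tree of depth `h`. -/
abbrev SG (d h : ℕ) : Type := (Vert d h → ℤ) ⧸ lat d h

/-- The image `x̄ᵢ` of the standard basis vector `xᵢ` in the sandpile group. -/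
def xbar (d h : ℕ) (i : Vert d h) : SG d h :=
  QuotientAddGroup.mk (Pi.single i 1)

/-- `θ(d,n) = ((d-1)^n - 1)/(d-2)`. -/
def theta (d n : ℕ) : ℕ := ((d - 1) ^ n - 1) / (d - 2)

end SandpileTree

/-! ### Auxiliary development -/

namespace SandpileTree
variable {d h : ℕ}

/-- step value of `v` at index `k`, as a natural number, `0` out of range. -/
def st (v : Vert d h) (k : ℕ) : ℕ := if hk : k < h then (v.1.2 ⟨k, hk⟩ : ℕ) else 0

lemma dep_le (v : Vert d h) : depth v ≤ h := Nat.lt_succ_iff.mp v.1.1.isLt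

lemma st_eq_zero_of_ge (v : Vert d h) {k : ℕ} (hk : depth v ≤ k) : st v k = 0 := by
  unfold st; split
  · exact v.2.1 _ hk
  · rfl

lemma st_lt (v : Vert d h) {k : ℕ} (h0 : 0 < k) (h1 : k < depth v) : st v k < d - 1 := by
  have := dep_le v
  unfold st; split
  · exact v.2.2 _ h0 h1
  · omega

lemma st_lt_d (v : Vert d h) (hd : 0 < d) (k : ℕ) : st v k < d := by
  unfold st; split
  · exact (v.1.2 _).isLt
  · exact hd

lemma Vert.ext' {v w : Vert d h} (h1 : depth v = depth w)
    (h2 : ∀ k, st v k = st w k) : v = w := by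
  apply Subtype.ext
  apply Prod.ext
  · exact Fin.ext h1
  · funext i
    apply Fin.ext
    have := h2 i
    unfold st at this
    rw [dif_pos i.isLt, dif_pos i.isLt] at this
    simpa using this

/-- constructor -/
def mkV (d h : ℕ) (n : ℕ) (f : ℕ → ℕ) (hd : 3 ≤ d) (hn : n ≤ h)
    (hf0 : ∀ k, n ≤ k → f k = 0) (hfd : ∀ k, 0 < k → k < n → f k < d - 1)
    (hf1 : f 0 < d) : Vert d h :=
  ⟨(⟨n, by omega⟩, fun i => ⟨f i, by
      rcases Nat.lt_or_ge (i : ℕ) n with hi | hi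
      · rcases Nat.eq_zero_or_pos (i : ℕ) with h0 | h0
        · rw [h0]; exact hf1
        · exact lt_of_lt_of_le (hfd _ h0 hi) (by omega)
      · rw [hf0 _ hi]; omega⟩),
   ⟨fun i hi => hf0 _ hi, fun i h0 h1 => hfd _ h0 h1⟩⟩

@[simp] lemma dep_mkV (n f hd hn hf0 hfd hf1) :
    depth (mkV d h n f hd hn hf0 hfd hf1) = n := rfl

lemma st_mkV (n f hd hn hf0 hfd hf1) (k : ℕ) :
    st (mkV d h n f hd hn hf0 hfd hf1) k = f k := by
  unfold st mkV
  split
  · rfl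
  · exact (hf0 k (by omega)).symm

/-- parent characterization in terms of `st`. -/
lemma isParent_iff {u v : Vert d h} :
    IsParent u v ↔ depth v = depth u + 1 ∧ ∀ k : ℕ, k < depth u → st v k = st u k := by
  constructor
  · rintro ⟨h1, h2⟩
    refine ⟨h1, fun k hk => ?_⟩
    have hkh : k < h := by have := dep_le v; omega
    have := h2 ⟨k, hkh⟩ (by simpa using hk)
    unfold st
    rw [dif_pos hkh, dif_pos hkh, this]
  · rintro ⟨h1, h2⟩
    refine ⟨h1, fun k hk => ?_⟩
    have := h2 k hk
    unfold st at this
    rw [dif_pos k.isLt, dif_pos k.isLt] at this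
    apply Fin.ext
    simpa using this


/-- total parent function: parent of `v` (itself if `v` is the root). -/
def parN (hd : 3 ≤ d) (v : Vert d h) : Vert d h :=
  if h1 : 1 ≤ depth v then
    mkV d h (depth v - 1) (fun k => if k < depth v - 1 then st v k else 0) hd
      (by have := dep_le v; omega)
      (fun k hk => by rw [if_neg (by omega)])
      (fun k h0 h1' => by
        rw [if_pos h1']
        exact st_lt v h0 (by omega))
      (by
        split
        · exact st_lt_d v (by omega) 0
        · omega)
  else v

lemma dep_parN (hd : 3 ≤ d) (v : Vert d h) : depth (parN hd v) = depth v - 1 := by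
  unfold parN; split
  · simp
  · omega

lemma st_parN (hd : 3 ≤ d) (v : Vert d h) (k : ℕ) :
    st (parN hd v) k = if k < depth v - 1 then st v k else 0 := by
  unfold parN; split
  · rw [st_mkV]
  · rename_i h1
    split
    · omega
    · exact st_eq_zero_of_ge v (by omega)

lemma isParent_parN (hd : 3 ≤ d) (v : Vert d h) (h1 : 1 ≤ depth v) :
    IsParent (parN hd v) v := by
  rw [isParent_iff]
  constructor
  · rw [dep_parN]; omega
  · intro k hk
    rw [dep_parN] at hk
    rw [st_parN, if_pos hk]

lemma parent_unique (hd : 3 ≤ d) {u v : Vert d h} (hp : IsParent u v) : u = parN hd v := by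
  rw [isParent_iff] at hp
  obtain ⟨h1, h2⟩ := hp
  apply Vert.ext'
  · rw [dep_parN]; omega
  · intro k
    rw [st_parN]
    split
    · rename_i hk
      exact (h2 k (by omega)).symm
    · rename_i hk
      exact st_eq_zero_of_ge u (by omega)

/-- the parent finset -/
def Pf (v : Vert d h) : Finset (Vert d h) := Finset.univ.filter (fun j => IsParent j v)

lemma Pf_eq (hd : 3 ≤ d) (v : Vert d h) (h1 : 1 ≤ depth v) : Pf v = {parN hd v} := by
  ext j
  simp only [Pf, Finset.mem_filter, Finset.mem_univ, true_and, Finset.mem_singleton]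
  constructor
  · exact parent_unique hd
  · rintro rfl; exact isParent_parN hd v h1

lemma Pf_empty (v : Vert d h) (h1 : depth v = 0) : Pf v = ∅ := by
  ext j
  simp only [Pf, Finset.mem_filter, Finset.mem_univ, true_and, Finset.notMem_empty,
    iff_false]
  intro hp
  rw [isParent_iff] at hp
  omega

/-- number of children -/
def cb (d : ℕ) (v : Vert d h) : ℕ := if depth v = 0 then d else d - 1

/-- total child function; junk value `v` if arguments invalid. -/
def childN (hd : 3 ≤ d) (v : Vert d h) (s : ℕ) : Vert d h :=
  if H : depth v < h ∧ s < cb d v then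
    mkV d h (depth v + 1)
      (fun k => if k < depth v then st v k else if k = depth v then s else 0) hd
      (by omega)
      (fun k hk => by
        rw [if_neg (by omega), if_neg (by omega)])
      (fun k h0 h1' => by
        rcases Nat.lt_or_ge k (depth v) with hk | hk
        · rw [if_pos hk]; exact st_lt v h0 hk
        · have hk2 : k = depth v := by omega
          rw [if_neg (by omega), if_pos hk2]
          have := H.2
          unfold cb at this
          rw [if_neg (by omega)] at this
          exact this)
      (by
        split
        · exact st_lt_d v (by omega) 0
        · split
          · have := H.2; unfold cb at this
            split at this <;> omega
          · omega)
  else v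

lemma dep_childN (hd : 3 ≤ d) (v : Vert d h) (s : ℕ) (H1 : depth v < h) (H2 : s < cb d v) :
    depth (childN hd v s) = depth v + 1 := by
  unfold childN; rw [dif_pos ⟨H1, H2⟩]; simp

lemma st_childN (hd : 3 ≤ d) (v : Vert d h) (s : ℕ) (H1 : depth v < h) (H2 : s < cb d v)
    (k : ℕ) :
    st (childN hd v s) k = if k < depth v then st v k else if k = depth v then s else 0 := by
  unfold childN; rw [dif_pos ⟨H1, H2⟩, st_mkV]

lemma isParent_childN (hd : 3 ≤ d) (v : Vert d h) (s : ℕ) (H1 : depth v < h)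
    (H2 : s < cb d v) : IsParent v (childN hd v s) := by
  rw [isParent_iff]
  refine ⟨by rw [dep_childN hd v s H1 H2], fun k hk => ?_⟩
  rw [st_childN hd v s H1 H2, if_pos hk]

/-- children finset -/
def Cf (v : Vert d h) : Finset (Vert d h) := Finset.univ.filter (fun j => IsParent v j)

lemma Cf_empty (v : Vert d h) (h1 : depth v = h) : Cf v = ∅ := by
  ext j
  simp only [Cf, Finset.mem_filter, Finset.mem_univ, true_and, Finset.notMem_empty,
    iff_false]
  intro hp
  rw [isParent_iff] at hp
  have := dep_le j
  omega

lemma child_mem_st (hd : 3 ≤ d) {v j : Vert d h} (hp : IsParent v j) :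
    st j (depth v) < cb d v := by
  rw [isParent_iff] at hp
  unfold cb
  split
  · exact st_lt_d j (by omega) _
  · exact st_lt j (by omega) (by omega)

lemma child_eq (hd : 3 ≤ d) {v j : Vert d h} (hp : IsParent v j) :
    j = childN hd v (st j (depth v)) := by
  have hst := child_mem_st hd hp
  rw [isParent_iff] at hp
  have H1 : depth v < h := by have := dep_le j; omega
  apply Vert.ext'
  · rw [dep_childN hd v _ H1 hst]; omega
  · intro k
    rw [st_childN hd v _ H1 hst]
    split
    · rename_i hk; exact hp.2 k hk
    · split
      · rename_i h1 h2; rw [h2]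
      · rename_i h1 h2
        exact st_eq_zero_of_ge j (by omega)

lemma Cf_eq (hd : 3 ≤ d) (v : Vert d h) (H1 : depth v < h) :
    Cf v = (Finset.range (cb d v)).image (childN hd v) := by
  ext j
  simp only [Cf, Finset.mem_filter, Finset.mem_univ, true_and, Finset.mem_image,
    Finset.mem_range]
  constructor
  · intro hp
    exact ⟨st j (depth v), child_mem_st hd hp, (child_eq hd hp).symm⟩
  · rintro ⟨s, hs, rfl⟩
    exact isParent_childN hd v s H1 hs

lemma childN_injOn (hd : 3 ≤ d) (v : Vert d h) (H1 : depth v < h) :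
    Set.InjOn (childN hd v) (Finset.range (cb d v)) := by
  intro a ha b hb hab
  simp only [Finset.coe_range, Set.mem_Iio] at ha hb
  have h1 := st_childN hd v a H1 ha (depth v)
  have h2 := st_childN hd v b H1 hb (depth v)
  rw [if_neg (by omega), if_pos rfl] at h1 h2
  rw [← h1, ← h2, hab]

lemma Cf_card (hd : 3 ≤ d) (v : Vert d h) (H1 : depth v < h) : (Cf v).card = cb d v := by
  rw [Cf_eq hd v H1, Finset.card_image_of_injOn (childN_injOn hd v H1), Finset.card_range]

lemma sum_Cf (hd : 3 ≤ d) {M : Type*} [AddCommMonoid M] (v : Vert d h) (H1 : depth v < h)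
    (W : Vert d h → M) :
    ∑ j ∈ Cf v, W j = ∑ s ∈ Finset.range (cb d v), W (childN hd v s) := by
  rw [Cf_eq hd v H1, Finset.sum_image (fun a ha b hb => childN_injOn hd v H1
    (by simpa using ha) (by simpa using hb))]

lemma parN_eq_of_isParent (hd : 3 ≤ d) {u v : Vert d h} (hp : IsParent u v) :
    parN hd v = u :=
  (parent_unique hd hp).symm

lemma parN_childN (hd : 3 ≤ d) (v : Vert d h) (s : ℕ) (H1 : depth v < h)
    (H2 : s < cb d v) : parN hd (childN hd v s) = v :=
  parN_eq_of_isParent hd (isParent_childN hd v s H1 H2)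

/-- the root -/
def rt (d h : ℕ) (hd : 3 ≤ d) : Vert d h :=
  mkV d h 0 (fun _ => 0) hd (Nat.zero_le h) (fun _ _ => rfl) (fun k h0 h1 => by omega)
    (by omega)

@[simp] lemma dep_rt (hd : 3 ≤ d) : depth (rt d h hd) = 0 := rfl

lemma st_rt (hd : 3 ≤ d) (k : ℕ) : st (rt d h hd) k = 0 := st_mkV _ _ _ _ _ _ _ _

lemma eq_rt_of_depth_zero (hd : 3 ≤ d) {v : Vert d h} (h0 : depth v = 0) : v = rt d h hd := by
  apply Vert.ext'
  · simp [h0]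
  · intro k
    rw [st_rt, st_eq_zero_of_ge v (by omega)]


variable {d h : ℕ}

/-- `T d n = 1 + (d-1) + ... + (d-1)^(n-1)` over ℤ. -/
def T (d n : ℕ) : ℤ := ∑ i ∈ Finset.range n, ((d : ℤ) - 1) ^ i

lemma T_one : T d 1 = 1 := by simp [T]

lemma T_two : T d 2 = (d : ℤ) := by
  simp [T, Finset.sum_range_succ]

lemma T_succ (n : ℕ) : T d (n + 1) = ((d : ℤ) - 1) * T d n + 1 := by
  unfold T
  rw [geom_sum_succ]

lemma T_rec (n : ℕ) : (d : ℤ) * T d (n + 1) - ((d : ℤ) - 1) * T d n = T d (n + 2) := by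
  have h1 := T_succ (d := d) n
  have h2 : T d (n + 2) = ((d : ℤ) - 1) * T d (n + 1) + 1 := T_succ (n + 1)
  linear_combination h1 - h2

lemma T_sub (n : ℕ) : T d (n + 1) - T d n = ((d : ℤ) - 1) ^ n := by
  unfold T
  rw [Finset.sum_range_succ]
  ring

lemma mk_delta_eq_zero (i : Vert d h) :
    (QuotientAddGroup.mk' (lat d h)) (delta d h i) = 0 := by
  rw [QuotientAddGroup.mk'_apply, QuotientAddGroup.eq_zero_iff]
  exact AddSubgroup.subset_closure ⟨i, rfl⟩

lemma xbar_eq (i : Vert d h) :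
    xbar d h i = (QuotientAddGroup.mk' (lat d h)) (Pi.single i 1) := rfl

lemma row_rel (i : Vert d h) :
    (d : ℤ) • xbar d h i = (∑ j ∈ Pf i, xbar d h j) + ∑ j ∈ Cf i, xbar d h j := by
  have h0 := mk_delta_eq_zero (i := i)
  unfold delta at h0
  rw [map_sub, map_sub, map_zsmul, map_sum, map_sum, sub_sub, sub_eq_zero] at h0
  rw [xbar_eq]
  exact h0

lemma row_rel' (hd : 3 ≤ d) (i : Vert d h) (h1 : 1 ≤ depth i) :
    (d : ℤ) • xbar d h i = xbar d h (parN hd i) + ∑ j ∈ Cf i, xbar d h j := by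
  have := row_rel (i := i)
  rwa [Pf_eq hd i h1, Finset.sum_singleton] at this

lemma row_rel_root (hd : 3 ≤ d) (i : Vert d h) (h1 : depth i = 0) :
    (d : ℤ) • xbar d h i = ∑ j ∈ Cf i, xbar d h j := by
  have := row_rel (i := i)
  rwa [Pf_empty i h1, Finset.sum_empty, zero_add] at this

lemma TRel (hd : 3 ≤ d) : ∀ m : ℕ, ∀ v : Vert d h, 1 ≤ depth v → h - depth v = m →
    T d (m + 2) • xbar d h v = T d (m + 1) • xbar d h (parN hd v) := by
  intro m
  induction m using Nat.strong_induction_on with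
  | _ m IH =>
    intro v h1 hm
    have hdep := dep_le v
    rcases Nat.eq_zero_or_pos m with hm0 | hm1
    · -- leaf case
      subst hm0
      have hvh : depth v = h := by omega
      have hrow := row_rel' hd v h1
      rw [Cf_empty v hvh, Finset.sum_empty, add_zero] at hrow
      rw [T_two, T_one, one_smul]
      exact hrow
    · -- internal case
      have hvh : depth v < h := by omega
      have hrow := row_rel' hd v h1
      have hsum : ∑ j ∈ Cf v, xbar d h j = (d:ℤ) • xbar d h v - xbar d h (parN hd v) := by
        rw [hrow]; abel
      have hchild : ∀ s ∈ Finset.range (cb d v),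
          T d (m + 1) • xbar d h (childN hd v s) = T d m • xbar d h v := by
        intro s hs
        rw [Finset.mem_range] at hs
        have h2 := IH (m - 1) (by omega) (childN hd v s)
          (by rw [dep_childN hd v s hvh hs]; omega)
          (by rw [dep_childN hd v s hvh hs]; omega)
        rw [parN_childN hd v s hvh hs] at h2
        rw [show m - 1 + 2 = m + 1 by omega, show m - 1 + 1 = m by omega] at h2
        exact h2
      have hcb : cb d v = d - 1 := by unfold cb; rw [if_neg (by omega)]
      have key : T d (m + 1) • ((d:ℤ) • xbar d h v - xbar d h (parN hd v))
          = (((d:ℤ) - 1) * T d m) • xbar d h v := by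
        rw [← hsum, (Finset.smul_sum (M := ℤ) (N := SG d h)), sum_Cf hd v hvh, Finset.sum_congr rfl hchild,
          Finset.sum_const, Finset.card_range, hcb]
        rw [← Nat.cast_smul_eq_nsmul ℤ, smul_smul]
        congr 1
        push_cast [Nat.cast_sub (by omega : 1 ≤ d)]
        ring
      rw [← T_rec]
      linear_combination (norm := module) key

lemma root_rel (hd : 3 ≤ d) (hh : 1 ≤ h) :
    ((d : ℤ) * ((d:ℤ) - 1) ^ h) • xbar d h (rt d h hd) = 0 := by
  set r := rt d h hd with hr
  have h0 : depth r = 0 := dep_rt hd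
  have hvh : depth r < h := by omega
  have hrow := row_rel_root hd r h0
  have hcb : cb d r = d := by unfold cb; rw [if_pos h0]
  have hchild : ∀ s ∈ Finset.range (cb d r),
      T d (h + 1) • xbar d h (childN hd r s) = T d h • xbar d h r := by
    intro s hs
    rw [Finset.mem_range] at hs
    have h2 := TRel hd (h - 1) (childN hd r s)
      (by rw [dep_childN hd r s hvh hs]; omega)
      (by rw [dep_childN hd r s hvh hs]; omega)
    rw [parN_childN hd r s hvh hs] at h2
    rw [show h - 1 + 2 = h + 1 by omega, show h - 1 + 1 = h by omega] at h2
    exact h2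
  have key : T d (h + 1) • ((d:ℤ) • xbar d h r) = ((d:ℤ) * T d h) • xbar d h r := by
    rw [hrow, (Finset.smul_sum (M := ℤ) (N := SG d h)), sum_Cf hd r hvh, Finset.sum_congr rfl hchild,
      Finset.sum_const, Finset.card_range, hcb, ← Nat.cast_smul_eq_nsmul ℤ, smul_smul]
  rw [show ((d:ℤ) - 1) ^ h = T d (h + 1) - T d h from (T_sub h).symm]
  linear_combination (norm := module) key

lemma sib_rel (hd : 3 ≤ d) {j j' : Vert d h} (h1 : 1 ≤ depth j)
    (h2 : depth j' = depth j) (h3 : parN hd j' = parN hd j) :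
    T d (h - depth j + 2) • (xbar d h j - xbar d h j') = 0 := by
  have r1 := TRel hd (h - depth j) j h1 rfl
  have r2 := TRel hd (h - depth j) j' (by omega) (by omega)
  rw [h3] at r2
  linear_combination (norm := module) r1 - r2

/-- `η(d-1,h+1)` -/
def eta (d h : ℕ) : ℕ := (Finset.Icc 1 (h + 1)).lcm (fun n => (d - 1) ^ n - 1)

/-- `θ(d,n)` as a geometric sum. -/
def Th (d n : ℕ) : ℕ := ∑ i ∈ Finset.range n, (d - 1) ^ i

lemma Th_cast (hd : 3 ≤ d) (n : ℕ) : ((Th d n : ℤ)) = T d n := by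
  unfold Th T
  push_cast [Nat.cast_sub (by omega : 1 ≤ d)]
  ring

lemma geo (hd : 3 ≤ d) (n : ℕ) : (d - 2) * Th d n = (d - 1) ^ n - 1 := by
  have h1 : 1 ≤ (d - 1) ^ n := Nat.one_le_pow _ _ (by omega)
  have hz : ((d : ℤ) - 1 - 1) * T d n = ((d : ℤ) - 1) ^ n - 1 := by
    have := geom_sum_mul ((d : ℤ) - 1) n
    rw [mul_comm] at this
    convert this using 2
    rfl
  apply Nat.cast_injective (R := ℤ)
  push_cast [Nat.cast_sub (by omega : 1 ≤ d), Nat.cast_sub (by omega : 2 ≤ d),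
    Nat.cast_sub h1, Th_cast hd]
  linear_combination hz

lemma pow_sub_one_dvd_eta (hd : 3 ≤ d) {n : ℕ} (h1 : 1 ≤ n) (h2 : n ≤ h + 1) :
    (d - 1) ^ n - 1 ∣ eta d h :=
  Finset.dvd_lcm (by simp [Finset.mem_Icc]; omega)

lemma eta_ne_zero (hd : 3 ≤ d) : eta d h ≠ 0 := by
  intro h0
  rw [eta, Finset.lcm_eq_zero_iff] at h0
  obtain ⟨n, hn, hzero⟩ := h0
  simp only [Finset.mem_Icc] at hn
  have e1 : 2 ^ n ≤ (d - 1) ^ n := Nat.pow_le_pow_left (by omega) n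
  have e2 : 2 ^ 1 ≤ 2 ^ n := Nat.pow_le_pow_right (by omega) hn.1
  have hzero' : (d - 1) ^ n - 1 = 0 := hzero
  omega

lemma eta_factor (hd : 3 ≤ d) {n : ℕ} (h1 : 1 ≤ n) (h2 : n ≤ h + 1) :
    ∃ q : ℤ, (eta d h : ℤ) = T d n * q := by
  obtain ⟨q0, hq0⟩ := pow_sub_one_dvd_eta hd h1 h2
  refine ⟨((d : ℤ) - 2) * (q0 : ℤ), ?_⟩
  have h3 : 1 ≤ (d - 1) ^ n := Nat.one_le_pow _ _ (by omega)
  have := geo hd n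
  calc (eta d h : ℤ) = (((d - 1) ^ n - 1 : ℕ) : ℤ) * q0 := by rw [hq0]; push_cast; ring
    _ = (((d - 2) * Th d n : ℕ) : ℤ) * q0 := by rw [this]
    _ = T d n * (((d : ℤ) - 2) * q0) := by
        push_cast [Nat.cast_sub (by omega : 2 ≤ d), Th_cast hd]
        ring

lemma e_kill_sib (hd : 3 ≤ d) {j j' : Vert d h} (h1 : 1 ≤ depth j)
    (h2 : depth j' = depth j) (h3 : parN hd j' = parN hd j) :
    (eta d h : ℤ) • (xbar d h j - xbar d h j') = 0 := by
  have hdep := dep_le j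
  obtain ⟨q, hq⟩ := eta_factor (h := h) hd (n := h - depth j + 2) (by omega) (by omega)
  have hs := sib_rel hd h1 h2 h3
  rw [hq]
  linear_combination (norm := module) q • hs

lemma up_rel (hd : 3 ≤ d) (hh : 1 ≤ h) : ∀ n : ℕ, ∀ v : Vert d h, depth v = n → 1 ≤ n →
    ∀ p : ℕ, n - 1 ≤ p →
    ((eta d h : ℤ) * d * ((d:ℤ) - 1) ^ p) • xbar d h v
      = ((eta d h : ℤ) * d * ((d:ℤ) - 1) ^ p) • xbar d h (rt d h hd) := by
  intro n
  induction n using Nat.strong_induction_on with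
  | _ n IH =>
    intro v hv h1 p hp
    have hdep := dep_le v
    rcases Nat.lt_or_ge n 2 with hn2 | hn2
    · -- n = 1 : v is a child of the root
      have hn1 : n = 1 := by omega
      have hpar : parN hd v = rt d h hd :=
        eq_rt_of_depth_zero hd (by rw [dep_parN]; omega)
      have hrow := row_rel_root hd (rt d h hd) (dep_rt hd)
      have hcb : cb d (rt d h hd) = d := by unfold cb; rw [if_pos (dep_rt hd)]
      have hsib : ∀ j ∈ Cf (rt d h hd), (eta d h : ℤ) • xbar d h j
          = (eta d h : ℤ) • xbar d h v := by
        intro j hj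
        rw [Cf, Finset.mem_filter] at hj
        have hpj := hj.2
        have hdj : depth j = 1 := by
          rw [isParent_iff] at hpj; rw [hpj.1, dep_rt]
        have := e_kill_sib hd (j := j) (j' := v) (by omega) (by omega)
          (by rw [hpar, parN_eq_of_isParent hd hpj])
        linear_combination (norm := module) this
      have key : (eta d h : ℤ) • ((d:ℤ) • xbar d h (rt d h hd))
          = ((d : ℕ) : ℤ) • ((eta d h : ℤ) • xbar d h v) := by
        rw [hrow, (Finset.smul_sum (M := ℤ) (N := SG d h)), Finset.sum_congr rfl hsib, Finset.sum_const,
          Cf_card hd _ (by rw [dep_rt]; omega), hcb, ← Nat.cast_smul_eq_nsmul ℤ]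
      subst hn1
      linear_combination (norm := module) (-(((d:ℤ) - 1) ^ p)) • key
    · -- n ≥ 2
      obtain ⟨q, rfl⟩ : ∃ q, p = q + 1 := ⟨p - 1, by omega⟩
      set u := parN hd v with hu
      have hdu : depth u = n - 1 := by rw [hu, dep_parN, hv]
      have hrowu := row_rel' hd u (by omega)
      have hcb : cb d u = d - 1 := by unfold cb; rw [if_neg (by omega)]
      have hsib : ∀ j ∈ Cf u, (eta d h : ℤ) • xbar d h j
          = (eta d h : ℤ) • xbar d h v := by
        intro j hj
        rw [Cf, Finset.mem_filter] at hj
        have hpj := hj.2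
        have hdj : depth j = n := by
          rw [isParent_iff] at hpj; omega
        have := e_kill_sib hd (j := j) (j' := v) (by omega) (by omega)
          (by rw [parN_eq_of_isParent hd hpj])
        linear_combination (norm := module) this
      have key : (eta d h : ℤ) • ((d:ℤ) • xbar d h u - xbar d h (parN hd u))
          = (((d - 1 : ℕ)) : ℤ) • ((eta d h : ℤ) • xbar d h v) := by
        have hsum : ∑ j ∈ Cf u, xbar d h j
            = (d:ℤ) • xbar d h u - xbar d h (parN hd u) := by rw [hrowu]; abel
        rw [← hsum, (Finset.smul_sum (M := ℤ) (N := SG d h)), Finset.sum_congr rfl hsib, Finset.sum_const,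
          Cf_card hd _ (by omega), hcb, ← Nat.cast_smul_eq_nsmul ℤ]
      have IHu := IH (n - 1) (by omega) u hdu (by omega) q (by omega)
      have IHw : ((eta d h : ℤ) * d * ((d:ℤ) - 1) ^ q) • xbar d h (parN hd u)
          = ((eta d h : ℤ) * d * ((d:ℤ) - 1) ^ q) • xbar d h (rt d h hd) := by
        rcases Nat.lt_or_ge n 3 with hn3 | hn3
        · have : depth (parN hd u) = 0 := by rw [dep_parN]; omega
          rw [eq_rt_of_depth_zero hd this]
        · exact IH (n - 2) (by omega) (parN hd u) (by rw [dep_parN]; omega)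
            (by omega) q (by omega)
      have hcast : (((d - 1 : ℕ)) : ℤ) = (d : ℤ) - 1 := by
        push_cast [Nat.cast_sub (by omega : 1 ≤ d)]; ring
      rw [hcast] at key
      rw [pow_succ]
      linear_combination (norm := module)
        (-((d:ℤ)) * ((d:ℤ) - 1) ^ q) • key + (d:ℤ) • IHu - IHw

lemma kill_xbar (hd : 3 ≤ d) (hh : 1 ≤ h) (v : Vert d h) :
    ((eta d h : ℤ) * d * ((d:ℤ) - 1) ^ h) • xbar d h v = 0 := by
  have hroot := root_rel hd hh
  rcases Nat.eq_zero_or_pos (depth v) with h0 | h0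
  · rw [eq_rt_of_depth_zero hd h0]
    linear_combination (norm := module) (eta d h : ℤ) • hroot
  · have := up_rel hd hh (depth v) v rfl h0 h (by have := dep_le v; omega)
    linear_combination (norm := module) this + (eta d h : ℤ) • hroot

lemma mk_eq_sum (f : Vert d h → ℤ) :
    (QuotientAddGroup.mk' (lat d h)) f = ∑ v, f v • xbar d h v := by
  conv_lhs => rw [← Finset.univ_sum_single f]
  rw [map_sum]
  refine Finset.sum_congr rfl fun v _ => ?_
  have hsingle : Pi.single v (f v) = (f v) • (Pi.single v (1 : ℤ) : Vert d h → ℤ) := by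
    funext w
    by_cases hw : w = v
    · subst hw; simp
    · simp [Pi.single_eq_of_ne hw]
  rw [hsingle, map_zsmul]
  rfl

lemma kill_all (hd : 3 ≤ d) (hh : 1 ≤ h) (g : SG d h) :
    (d * (d - 1) ^ h * eta d h) • g = 0 := by
  induction g using QuotientAddGroup.induction_on with
  | H f =>
    have hmk : (QuotientAddGroup.mk f : SG d h) = ∑ v, f v • xbar d h v := mk_eq_sum f
    rw [hmk, ← natCast_zsmul, (Finset.smul_sum (M := ℤ) (N := SG d h))]
    rw [show ((d * (d - 1) ^ h * eta d h : ℕ) : ℤ)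
        = (eta d h : ℤ) * d * ((d:ℤ) - 1) ^ h by
      push_cast [Nat.cast_sub (by omega : 1 ≤ d)]; ring]
    refine Finset.sum_eq_zero fun v _ => ?_
    rw [smul_comm, kill_xbar hd hh v, smul_zero]

lemma exp_dvd (hd : 3 ≤ d) (hh : 1 ≤ h) :
    AddMonoid.exponent (SG d h) ∣ d * (d - 1) ^ h * eta d h :=
  AddMonoid.exponent_dvd_of_forall_nsmul_eq_zero (kill_all hd hh)

lemma bound_ne_zero (hd : 3 ≤ d) : d * (d - 1) ^ h * eta d h ≠ 0 := by
  have h1 := eta_ne_zero (h := h) hd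
  have h2 : 0 < (d - 1) ^ h := Nat.pow_pos (by omega)
  positivity

lemma exp_ne_zero (hd : 3 ≤ d) (hh : 1 ≤ h) : AddMonoid.exponent (SG d h) ≠ 0 := by
  intro h0
  have := exp_dvd hd hh
  rw [h0] at this
  exact bound_ne_zero hd (Nat.eq_zero_of_zero_dvd this)

lemma upper_bound (hd : 3 ≤ d) (hh : 1 ≤ h) :
    AddMonoid.exponent (SG d h) ≤ d * (d - 1) ^ h * eta d h :=
  Nat.le_of_dvd (Nat.pos_of_ne_zero (bound_ne_zero hd)) (exp_dvd hd hh)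

/-- linear functional given by weights -/
def wsum (w : Vert d h → ℤ) : (Vert d h → ℤ) →+ ℤ :=
  AddMonoidHom.mk' (fun g => ∑ v, g v * w v) (by
    intro a b
    simp [add_mul, Finset.sum_add_distrib])

lemma wsum_single (w : Vert d h → ℤ) (i : Vert d h) :
    wsum w (Pi.single i 1) = w i := by
  unfold wsum
  rw [AddMonoidHom.mk'_apply]
  rw [Finset.sum_eq_single i]
  · simp
  · intro b _ hb
    rw [Pi.single_eq_of_ne hb, zero_mul]
  · intro hi
    exact absurd (Finset.mem_univ i) hi

/-- condition for the weights to define a homomorphism mod `c` -/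
def RowCond (c : ℕ) (w : Vert d h → ℤ) : Prop :=
  ∀ i : Vert d h, (c : ℤ) ∣ ((d : ℤ) * w i - (∑ j ∈ Pf i, w j) - (∑ j ∈ Cf i, w j))

lemma wsum_delta (w : Vert d h → ℤ) (i : Vert d h) :
    wsum w (delta d h i)
      = (d : ℤ) * w i - (∑ j ∈ Pf i, w j) - (∑ j ∈ Cf i, w j) := by
  unfold delta
  rw [map_sub, map_sub, map_zsmul, map_sum, map_sum, wsum_single]
  have hP : ∀ j, wsum w (Pi.single j 1) = w j := wsum_single w
  rw [Finset.sum_congr rfl fun j _ => hP j, Finset.sum_congr rfl fun j _ => hP j]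
  rw [zsmul_eq_mul]
  rfl

/-- хom to `ZMod c` induced by weights -/
def phi (c : ℕ) (w : Vert d h → ℤ) (hcond : RowCond c w) : SG d h →+ ZMod c :=
  QuotientAddGroup.lift (lat d h) ((Int.castAddHom (ZMod c)).comp (wsum w)) (by
    rw [lat]
    rw [AddSubgroup.closure_le]
    rintro g ⟨i, rfl⟩
    simp only [SetLike.mem_coe, AddMonoidHom.mem_ker, AddMonoidHom.comp_apply,
      Int.coe_castAddHom]
    rw [wsum_delta]
    rw [ZMod.intCast_zmod_eq_zero_iff_dvd]
    exact hcond i)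

lemma phi_xbar (c : ℕ) (w : Vert d h → ℤ) (hcond : RowCond c w) (i : Vert d h) :
    phi c w hcond (xbar d h i) = ((w i : ℤ) : ZMod c) := by
  unfold phi xbar
  rw [QuotientAddGroup.lift_mk]
  simp only [AddMonoidHom.comp_apply, Int.coe_castAddHom]
  rw [wsum_single]

lemma order_dvd_exponent_of_weights (c : ℕ) (w : Vert d h → ℤ) (hcond : RowCond c w)
    (v : Vert d h) :
    addOrderOf ((w v : ZMod c)) ∣ AddMonoid.exponent (SG d h) := by
  have h1 := addOrderOf_map_dvd (phi c w hcond) (xbar d h v)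
  rw [phi_xbar] at h1
  exact dvd_trans h1 (AddMonoid.addOrder_dvd_exponent _)

/-- weights for the depth homomorphism mod `(d-1)^h` -/
def wR (d h : ℕ) (v : Vert d h) : ℤ := 1 - ((d:ℤ) - 1) ^ (h + 1 - depth v)

lemma wR_cond (hd : 3 ≤ d) (hh : 1 ≤ h) : RowCond ((d - 1) ^ h) (wR d h) := by
  intro i
  have hdep := dep_le i
  have hcast : (((d - 1) ^ h : ℕ) : ℤ) = ((d:ℤ) - 1) ^ h := by
    push_cast [Nat.cast_sub (by omega : 1 ≤ d)]; ring
  rw [hcast]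
  rcases Nat.eq_zero_or_pos (depth i) with h0 | h0
  · -- root row
    rw [Pf_empty i h0, Finset.sum_empty, sum_Cf hd i (by omega)]
    have hch : ∀ s ∈ Finset.range (cb d i), wR d h (childN hd i s) = 1 - ((d:ℤ) - 1) ^ h := by
      intro s hs
      rw [Finset.mem_range] at hs
      unfold wR
      rw [dep_childN hd i s (by omega) hs, h0]
      norm_num
    rw [Finset.sum_congr rfl hch, Finset.sum_const, Finset.card_range,
      show cb d i = d by unfold cb; rw [if_pos h0]]
    unfold wR
    rw [h0]
    refine ⟨(d:ℤ) * (1 - ((d:ℤ) - 1)), ?_⟩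
    rw [show h + 1 - 0 = h + 1 by omega]
    push_cast
    ring
  · rw [Pf_eq hd i h0, Finset.sum_singleton,
      show wR d h (parN hd i) = 1 - ((d:ℤ) - 1) ^ (h + 2 - depth i) by
        unfold wR; rw [dep_parN]; congr 2; omega]
    rcases Nat.lt_or_ge (depth i) h with hih | hih
    · -- internal row: exact zero
      rw [sum_Cf hd i hih]
      have hch : ∀ s ∈ Finset.range (cb d i),
          wR d h (childN hd i s) = 1 - ((d:ℤ) - 1) ^ (h - depth i) := by
        intro s hs
        rw [Finset.mem_range] at hs
        unfold wR
        rw [dep_childN hd i s hih hs]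
        congr 2
        omega
      rw [Finset.sum_congr rfl hch, Finset.sum_const, Finset.card_range,
        show cb d i = d - 1 by unfold cb; rw [if_neg (by omega)], nsmul_eq_mul]
      obtain ⟨m, hm⟩ : ∃ m, h - depth i = m := ⟨h - depth i, rfl⟩
      rw [show h + 2 - depth i = m + 2 by omega, hm]
      unfold wR
      rw [show h + 1 - depth i = m + 1 by omega]
      refine ⟨0, ?_⟩
      push_cast [Nat.cast_sub (by omega : 1 ≤ d)]
      ring
    · -- leaf row
      have hih' : depth i = h := by omega
      rw [Cf_empty i hih', Finset.sum_empty]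
      unfold wR
      rw [show h + 1 - depth i = 1 by omega, show h + 2 - depth i = 2 by omega]
      refine ⟨0, by ring⟩

lemma pow_dvd_exponent (hd : 3 ≤ d) (hh : 1 ≤ h) :
    (d - 1) ^ h ∣ AddMonoid.exponent (SG d h) := by
  -- evaluate at a leaf
  set v0 : Vert d h := mkV d h h (fun _ => 0) hd le_rfl (fun _ _ => rfl)
    (fun k h0 h1 => by omega) (by omega) with hv0
  have hw : wR d h v0 = -(((d - 2 : ℕ) : ℤ)) := by
    unfold wR
    rw [show depth v0 = h from rfl, show h + 1 - h = 1 by omega]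
    push_cast [Nat.cast_sub (by omega : 2 ≤ d)]
    ring
  have horder := order_dvd_exponent_of_weights ((d - 1) ^ h) (wR d h) (wR_cond hd hh) v0
  rw [hw] at horder
  have hne : (d - 1) ^ h ≠ 0 := by
    have : 0 < (d - 1) ^ h := Nat.pow_pos (by omega)
    omega
  rw [Int.cast_neg, Int.cast_natCast, addOrderOf_neg, ZMod.addOrderOf_coe _ hne] at horder
  have hcop : Nat.gcd ((d - 1) ^ h) (d - 2) = 1 := by
    have : Nat.Coprime (d - 1) (d - 2) := by
      rw [show d - 1 = 1 + (d - 2) by omega]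
      exact Nat.coprime_add_self_left.mpr (Nat.coprime_one_left _)
    exact (this.pow_left h)
  rwa [hcop, Nat.div_one] at horder

/-- starting depth of the two sibling subtrees used for modulus `(d-1)^n - 1` -/
def jdep (h n : ℕ) : ℕ := h + 2 - n

def InP (d h n : ℕ) (v : Vert d h) : Prop :=
  jdep h n ≤ depth v ∧ ∀ k, k < jdep h n → st v k = 0

def InM (d h n : ℕ) (v : Vert d h) : Prop :=
  jdep h n ≤ depth v ∧ st v (jdep h n - 1) = 1 ∧ ∀ k, k < jdep h n - 1 → st v k = 0

noncomputable def fS (d n k : ℕ) : ℤ := ((d:ℤ) - 1) ^ (n - k) - ((d:ℤ) - 1)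

open Classical in
noncomputable def wS (d h n : ℕ) (v : Vert d h) : ℤ :=
  if InP d h n v then fS d n (depth v - jdep h n)
  else if InM d h n v then -fS d n (depth v - jdep h n) else 0

lemma fS_eq {d n t e : ℕ} (he : n - t = e) : fS d n t = ((d:ℤ) - 1) ^ e - ((d:ℤ) - 1) := by
  unfold fS; rw [he]

lemma wS_of_InP {d h n : ℕ} {v : Vert d h} (hP : InP d h n v) :
    wS d h n v = fS d n (depth v - jdep h n) := by
  unfold wS; rw [if_pos hP]

lemma InP_not_InM {d h n : ℕ} {v : Vert d h} (hj : 1 ≤ jdep h n) (hP : InP d h n v) :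
    ¬ InM d h n v := by
  intro hM
  have := hP.2 (jdep h n - 1) (by omega)
  have := hM.2.1
  omega

lemma wS_of_InM {d h n : ℕ} {v : Vert d h} (hj : 1 ≤ jdep h n) (hM : InM d h n v)
    (hP : ¬ InP d h n v) :
    wS d h n v = -fS d n (depth v - jdep h n) := by
  unfold wS; rw [if_neg hP, if_pos hM]

lemma wS_of_not {d h n : ℕ} {v : Vert d h} (h1 : ¬ InP d h n v) (h2 : ¬ InM d h n v) :
    wS d h n v = 0 := by
  unfold wS; rw [if_neg h1, if_neg h2]

lemma wS_dep_lt {d h n : ℕ} {v : Vert d h} (hv : depth v < jdep h n) : wS d h n v = 0 :=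
  wS_of_not (fun H => absurd H.1 (by omega)) (fun H => absurd H.1 (by omega))

lemma wS_cond (d h n : ℕ) (hd : 3 ≤ d) (hh : 1 ≤ h) (hn1 : 2 ≤ n) (hn2 : n ≤ h + 1) :
    RowCond ((d - 1) ^ n - 1) (wS d h n) := by
  obtain ⟨N, rfl⟩ : ∃ N, n = N + 2 := ⟨n - 2, by omega⟩
  set n := N + 2 with hnn
  intro i
  set j := jdep h n with hjd
  have hjval : j = h + 2 - n := rfl
  have hj1 : 1 ≤ j := by omega
  have hj2 : j ≤ h := by omega
  have hdep := dep_le i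
  have hpow : 1 ≤ (d - 1) ^ n := Nat.one_le_pow _ _ (by omega)
  have hcast : (((d - 1) ^ n - 1 : ℕ) : ℤ) = ((d:ℤ) - 1) ^ n - 1 := by
    push_cast [Nat.cast_sub hpow, Nat.cast_sub (by omega : 1 ≤ d)]; ring
  rw [hcast]
  by_cases hP : InP d h n i
  · -- Case A : i in the plus subtree
    have hji : j ≤ depth i := hP.1
    have hk2 : depth i - j ≤ N := by omega
    have hwi : wS d h n i = fS d n (depth i - j) := wS_of_InP hP
    -- parent weight
    have hwpar : wS d h n (parN hd i) =
        (if j < depth i then fS d n (depth i - j - 1) else 0) := by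
      split
      · rename_i hlt
        have hPp : InP d h n (parN hd i) := by
          refine ⟨by rw [dep_parN]; omega, fun k hk => ?_⟩
          rw [st_parN, if_pos (by omega)]
          exact hP.2 k hk
        rw [wS_of_InP hPp, dep_parN]
        congr 1
        omega
      · rename_i hlt
        exact wS_dep_lt (by rw [dep_parN]; omega)
    -- children sum
    have hsum : ∑ x ∈ Cf i, wS d h n x = ((d:ℤ) - 1) * fS d n (depth i - j + 1) := by
      rcases Nat.lt_or_ge (depth i) h with hih | hih
      · have hch : ∀ s ∈ Finset.range (cb d i),
            wS d h n (childN hd i s) = fS d n (depth i - j + 1) := by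
          intro s hs
          rw [Finset.mem_range] at hs
          have hPc : InP d h n (childN hd i s) := by
            refine ⟨by rw [dep_childN hd i s hih hs]; omega, fun k hk => ?_⟩
            rw [st_childN hd i s hih hs, if_pos (by omega)]
            exact hP.2 k hk
          rw [wS_of_InP hPc, dep_childN hd i s hih hs]
          congr 1
          omega
        rw [sum_Cf hd i hih, Finset.sum_congr rfl hch, Finset.sum_const,
          Finset.card_range, show cb d i = d - 1 by unfold cb; rw [if_neg (by omega)],
          nsmul_eq_mul]
        congr 1
        push_cast [Nat.cast_sub (by omega : 1 ≤ d)]; ring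
      · have hih' : depth i = h := by omega
        rw [Cf_empty i hih', Finset.sum_empty]
        have : depth i - j + 1 = N + 1 := by omega
        rw [this, fS_eq (by omega : n - (N+1) = 1)]
        ring
    rw [Pf_eq hd i (by omega), Finset.sum_singleton, hwi, hwpar, hsum]
    rcases Nat.eq_or_lt_of_le hji with hji' | hji'
    · -- k = 0
      rw [if_neg (by omega), show depth i - j = 0 by omega]
      rw [fS_eq (by omega : n - 0 = N + 2), fS_eq (by omega : n - (0 + 1) = N + 1)]
      exact ⟨(d:ℤ) - 1, by ring⟩
    · -- k ≥ 1
      rw [if_pos (by omega)]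
      obtain ⟨e, he⟩ : ∃ e, N - (depth i - j) = e := ⟨_, rfl⟩
      rw [fS_eq (by omega : n - (depth i - j) = e + 2),
        fS_eq (by omega : n - (depth i - j - 1) = e + 3),
        fS_eq (by omega : n - (depth i - j + 1) = e + 1)]
      exact ⟨0, by ring⟩
  · by_cases hM : InM d h n i
    · -- Case B : i in the minus subtree
      have hji : j ≤ depth i := hM.1
      have hk2 : depth i - j ≤ N := by omega
      have hwi : wS d h n i = -fS d n (depth i - j) := wS_of_InM hj1 hM hP
      have hwpar : wS d h n (parN hd i) =
          (if j < depth i then -fS d n (depth i - j - 1) else 0) := by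
        split
        · rename_i hlt
          have hMp : InM d h n (parN hd i) := by
            refine ⟨by rw [dep_parN]; omega, ?_, fun k hk => ?_⟩
            · rw [st_parN, if_pos (by omega)]; exact hM.2.1
            · rw [st_parN, if_pos (by omega)]; exact hM.2.2 k hk
          rw [wS_of_InM hj1 hMp (fun HP => InP_not_InM hj1 HP hMp), dep_parN]
          congr 2
          omega
        · rename_i hlt
          exact wS_dep_lt (by rw [dep_parN]; omega)
      have hsum : ∑ x ∈ Cf i, wS d h n x = ((d:ℤ) - 1) * (-fS d n (depth i - j + 1)) := by
        rcases Nat.lt_or_ge (depth i) h with hih | hih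
        · have hch : ∀ s ∈ Finset.range (cb d i),
              wS d h n (childN hd i s) = -fS d n (depth i - j + 1) := by
            intro s hs
            rw [Finset.mem_range] at hs
            have hMc : InM d h n (childN hd i s) := by
              refine ⟨by rw [dep_childN hd i s hih hs]; omega, ?_, fun k hk => ?_⟩
              · rw [st_childN hd i s hih hs, if_pos (by omega)]; exact hM.2.1
              · rw [st_childN hd i s hih hs, if_pos (by omega)]; exact hM.2.2 k hk
            rw [wS_of_InM hj1 hMc (fun HP => InP_not_InM hj1 HP hMc),
              dep_childN hd i s hih hs]
            congr 2
            omega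
          rw [sum_Cf hd i hih, Finset.sum_congr rfl hch, Finset.sum_const,
            Finset.card_range, show cb d i = d - 1 by unfold cb; rw [if_neg (by omega)],
            nsmul_eq_mul]
          push_cast [Nat.cast_sub (by omega : 1 ≤ d)]; ring
        · have hih' : depth i = h := by omega
          rw [Cf_empty i hih', Finset.sum_empty]
          have : depth i - j + 1 = N + 1 := by omega
          rw [this, fS_eq (by omega : n - (N+1) = 1)]
          ring
      rw [Pf_eq hd i (by omega), Finset.sum_singleton, hwi, hwpar, hsum]
      rcases Nat.eq_or_lt_of_le hji with hji' | hji'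
      · rw [if_neg (by omega), show depth i - j = 0 by omega]
        rw [fS_eq (by omega : n - 0 = N + 2), fS_eq (by omega : n - (0 + 1) = N + 1)]
        exact ⟨-((d:ℤ) - 1), by ring⟩
      · rw [if_pos (by omega)]
        obtain ⟨e, he⟩ : ∃ e, N - (depth i - j) = e := ⟨_, rfl⟩
        rw [fS_eq (by omega : n - (depth i - j) = e + 2),
          fS_eq (by omega : n - (depth i - j - 1) = e + 3),
          fS_eq (by omega : n - (depth i - j + 1) = e + 1)]
        exact ⟨0, by ring⟩
    · by_cases hU : depth i = j - 1 ∧ ∀ k, k < j - 1 → st i k = 0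
      · -- Case C : i is the common parent of the two subtree roots
        have hwi : wS d h n i = 0 := wS_dep_lt (by omega)
        have hih : depth i < h := by omega
        have hch : ∀ s ∈ Finset.range (cb d i),
            wS d h n (childN hd i s) =
              (if s = 0 then fS d n 0 else 0) + (if s = 1 then -fS d n 0 else 0) := by
          intro s hs
          rw [Finset.mem_range] at hs
          have hdc : depth (childN hd i s) = j := by
            rw [dep_childN hd i s hih hs]; omega
          have hstc : ∀ k, k < j - 1 → st (childN hd i s) k = 0 := by
            intro k hk
            rw [st_childN hd i s hih hs, if_pos (by omega)]
            exact hU.2 k hk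
          have hstj : st (childN hd i s) (j - 1) = s := by
            rw [st_childN hd i s hih hs, if_neg (by omega), if_pos (by omega)]
          rcases Nat.eq_zero_or_pos s with hs0 | hs0
          · subst hs0
            have hPc : InP d h n (childN hd i 0) := by
              refine ⟨by omega, fun k hk => ?_⟩
              rcases Nat.lt_or_ge k (j - 1) with hk1 | hk1
              · exact hstc k hk1
              · have : k = j - 1 := by omega
                rw [this, hstj]
            rw [wS_of_InP hPc, hdc, if_pos rfl, if_neg (by omega)]
            rw [show j - j = 0 by omega]
            ring
          · rcases Nat.eq_or_lt_of_le hs0 with hs1 | hs1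
            · -- s = 1
              have hMc : InM d h n (childN hd i s) := by
                refine ⟨by omega, by rw [hstj, ← hs1], hstc⟩
              rw [wS_of_InM hj1 hMc (fun HP => InP_not_InM hj1 HP hMc), hdc,
                if_neg (by omega), if_pos hs1.symm]
              rw [show j - j = 0 by omega]
              ring
            · -- s ≥ 2
              have hPc : ¬ InP d h n (childN hd i s) := by
                intro HP
                have := HP.2 (j - 1) (by omega)
                rw [hstj] at this
                omega
              have hMc : ¬ InM d h n (childN hd i s) := by
                intro HM
                have := HM.2.1
                rw [hstj] at this
                omega
              rw [wS_of_not hPc hMc, if_neg (by omega), if_neg (by omega)]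
              ring
        have hcb2 : 2 ≤ cb d i := by unfold cb; split <;> omega
        have hsum0 : ∑ x ∈ Cf i, wS d h n x = 0 := by
          rw [sum_Cf hd i hih, Finset.sum_congr rfl hch, Finset.sum_add_distrib,
            Finset.sum_ite_eq' _ (0 : ℕ), Finset.sum_ite_eq' _ (1 : ℕ),
            if_pos (Finset.mem_range.mpr (by omega)),
            if_pos (Finset.mem_range.mpr (by omega))]
          ring
        have hpar0 : ∑ x ∈ Pf i, wS d h n x = 0 := by
          rcases Nat.eq_zero_or_pos (depth i) with h0 | h0
          · rw [Pf_empty i h0, Finset.sum_empty]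
          · rw [Pf_eq hd i h0, Finset.sum_singleton]
            exact wS_dep_lt (by rw [dep_parN]; omega)
        rw [hwi, hpar0, hsum0]
        exact ⟨0, by ring⟩
      · -- Case D : all weights vanish
        have hwi : wS d h n i = 0 := wS_of_not hP hM
        have hpar0 : ∑ x ∈ Pf i, wS d h n x = 0 := by
          rcases Nat.eq_zero_or_pos (depth i) with h0 | h0
          · rw [Pf_empty i h0, Finset.sum_empty]
          · rw [Pf_eq hd i h0, Finset.sum_singleton]
            refine wS_of_not (fun HPp => hP ?_) (fun HMp => hM ?_)
            · have hdp : j ≤ depth i - 1 := by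
                have := HPp.1; rwa [dep_parN] at this
              refine ⟨by omega, fun k hk => ?_⟩
              have := HPp.2 k hk
              rwa [st_parN, if_pos (by omega)] at this
            · have hdp : j ≤ depth i - 1 := by
                have := HMp.1; rwa [dep_parN] at this
              refine ⟨by omega, ?_, fun k hk => ?_⟩
              · have := HMp.2.1
                rwa [st_parN, if_pos (by omega)] at this
              · have := HMp.2.2 k hk
                rwa [st_parN, if_pos (by omega)] at this
        have hch0 : ∑ x ∈ Cf i, wS d h n x = 0 := by
          rcases Nat.eq_or_lt_of_le hdep with hih | hih
          · rw [Cf_empty i hih, Finset.sum_empty]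
          · rw [sum_Cf hd i hih]
            refine Finset.sum_eq_zero fun s hs => ?_
            rw [Finset.mem_range] at hs
            have hdc : depth (childN hd i s) = depth i + 1 := dep_childN hd i s hih hs
            refine wS_of_not (fun HPc => ?_) (fun HMc => ?_)
            · rcases Nat.lt_or_ge (depth i) (j - 1) with hcase | hcase
              · have := HPc.1; omega
              · rcases Nat.eq_or_lt_of_le hcase with hcase' | hcase'
                · refine hU ⟨by omega, fun k hk => ?_⟩
                  have := HPc.2 k (by omega)
                  rwa [st_childN hd i s hih hs, if_pos (by omega)] at this
                · refine hP ⟨by omega, fun k hk => ?_⟩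
                  have := HPc.2 k hk
                  rwa [st_childN hd i s hih hs, if_pos (by omega)] at this
            · rcases Nat.lt_or_ge (depth i) (j - 1) with hcase | hcase
              · have := HMc.1; omega
              · rcases Nat.eq_or_lt_of_le hcase with hcase' | hcase'
                · refine hU ⟨by omega, fun k hk => ?_⟩
                  have := HMc.2.2 k (by omega)
                  rwa [st_childN hd i s hih hs, if_pos (by omega)] at this
                · refine hM ⟨by omega, ?_, fun k hk => ?_⟩
                  · have := HMc.2.1
                    rwa [st_childN hd i s hih hs, if_pos (by omega)] at this
                  · have := HMc.2.2 k hk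
                    rwa [st_childN hd i s hih hs, if_pos (by omega)] at this
        rw [hwi, hpar0, hch0]
        exact ⟨0, by ring⟩

lemma theta_dvd_exponent (hd : 3 ≤ d) (hh : 1 ≤ h) {n : ℕ} (hn1 : 2 ≤ n)
    (hn2 : n ≤ h + 1) : Th d n ∣ AddMonoid.exponent (SG d h) := by
  have hj2 : jdep h n ≤ h := by unfold jdep; omega
  set c : ℕ := (d - 1) ^ n - 1 with hc
  have hpow : 1 ≤ (d - 1) ^ n := Nat.one_le_pow _ _ (by omega)
  have hcne : c ≠ 0 := by
    have : 2 ^ n ≤ (d - 1) ^ n := Nat.pow_le_pow_left (by omega) n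
    have : 2 ^ 2 ≤ 2 ^ n := Nat.pow_le_pow_right (by omega) hn1
    omega
  have hcast : ((c : ℕ) : ℤ) = ((d:ℤ) - 1) ^ n - 1 := by
    rw [hc]
    push_cast [Nat.cast_sub hpow, Nat.cast_sub (by omega : 1 ≤ d)]; ring
  -- the vertex v₊
  set v0 : Vert d h := mkV d h (jdep h n) (fun _ => 0) hd hj2 (fun _ _ => rfl)
    (fun k h0 h1 => by omega) (by omega) with hv0
  have hdep0 : depth v0 = jdep h n := rfl
  have hP0 : InP d h n v0 := by
    refine ⟨le_of_eq hdep0.symm, fun k hk => ?_⟩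
    rw [hv0, st_mkV]
  have hw0 : wS d h n v0 = fS d n 0 := by
    rw [wS_of_InP hP0, hdep0, Nat.sub_self]
  have horder := order_dvd_exponent_of_weights c (wS d h n)
    (wS_cond d h n hd hh hn1 hn2) v0
  -- evaluate the weight mod `c`
  have hvv : ((wS d h n v0 : ℤ) : ZMod c) = -(((d - 2 : ℕ) : ZMod c)) := by
    have hdiff : (((wS d h n v0 - (-((d - 2 : ℕ) : ℤ))) : ℤ) : ZMod c) = 0 := by
      rw [ZMod.intCast_zmod_eq_zero_iff_dvd]
      refine ⟨1, ?_⟩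
      rw [hw0, fS_eq (Nat.sub_zero n), hcast]
      push_cast [Nat.cast_sub (by omega : 2 ≤ d)]
      ring
    push_cast at hdiff
    linear_combination hdiff
  rw [hvv, addOrderOf_neg, ZMod.addOrderOf_coe _ hcne] at horder
  have hdvd2 : (d - 2) ∣ c := ⟨Th d n, (geo hd n).symm⟩
  rw [Nat.gcd_eq_right hdvd2] at horder
  have : c / (d - 2) = Th d n := by
    rw [hc, ← geo hd n, Nat.mul_div_cancel_left _ (by omega : 0 < d - 2)]
  rwa [this] at horder

lemma Th_succ (m : ℕ) : Th d (m + 1) = 1 + Th d m * (d - 1) := by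
  unfold Th
  rw [Finset.sum_range_succ']
  simp only [pow_succ, pow_zero]
  rw [← Finset.sum_mul]
  omega

lemma coprime_Th (hd : 3 ≤ d) {n : ℕ} (hn : 1 ≤ n) : Nat.Coprime (d - 1) (Th d n) := by
  obtain ⟨m, rfl⟩ : ∃ m, n = m + 1 := ⟨n - 1, by omega⟩
  rw [Th_succ]
  exact (Nat.coprime_add_mul_right_right _ 1 _).mpr (Nat.coprime_one_right _)

lemma Th_pos (hd : 3 ≤ d) {n : ℕ} (hn : 1 ≤ n) : 0 < Th d n := by
  obtain ⟨m, rfl⟩ : ∃ m, n = m + 1 := ⟨n - 1, by omega⟩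
  rw [Th_succ]
  omega

lemma lower_bound (hd : 3 ≤ d) (hh : 1 ≤ h) :
    eta d h ≤ AddMonoid.exponent (SG d h) := by
  set E := AddMonoid.exponent (SG d h) with hE
  set L := (Finset.Icc 1 (h + 1)).lcm (Th d) with hL
  have hThdvd : ∀ n ∈ Finset.Icc 1 (h + 1), Th d n ∣ E := by
    intro n hn
    rw [Finset.mem_Icc] at hn
    rcases Nat.lt_or_ge n 2 with hn2 | hn2
    · have : n = 1 := by omega
      subst this
      have : Th d 1 = 1 := by unfold Th; simp
      rw [this]; exact one_dvd _
    · exact theta_dvd_exponent hd hh hn2 hn.2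
  have hLE : L ∣ E := Finset.lcm_dvd hThdvd
  have hLprod : L ∣ ∏ n ∈ Finset.Icc 1 (h + 1), Th d n :=
    Finset.lcm_dvd fun b hb => Finset.dvd_prod_of_mem _ hb
  have hcopL : Nat.Coprime (d - 1) L :=
    Nat.Coprime.coprime_dvd_right hLprod
      (Nat.Coprime.prod_right fun n hn => coprime_Th hd (by
        rw [Finset.mem_Icc] at hn; omega))
  have hKdvd : (d - 1) ^ h * L ∣ E :=
    (hcopL.pow_left h).mul_dvd_of_dvd_of_dvd (pow_dvd_exponent hd hh) hLE
  have hEpos : 0 < E := Nat.pos_of_ne_zero (exp_ne_zero hd hh)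
  have hLpos : 0 < L := by
    rcases Nat.eq_zero_or_pos L with h0 | h0
    · exfalso
      rw [hL, Finset.lcm_eq_zero_iff] at h0
      obtain ⟨n, hn, hzero⟩ := h0
      simp only [Finset.mem_Icc] at hn
      have := Th_pos hd hn.1
      omega
    · exact h0
  have hetaL : eta d h ∣ (d - 2) * L := by
    refine Finset.lcm_dvd fun n hn => ?_
    rw [Finset.mem_Icc] at hn
    rw [← geo hd n]
    exact mul_dvd_mul_left _ (Finset.dvd_lcm (by simp [Finset.mem_Icc]; omega))
  calc eta d h ≤ (d - 2) * L := Nat.le_of_dvd (Nat.mul_pos (by omega) hLpos) hetaL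
    _ ≤ (d - 1) ^ h * L := by
        have h1 : d - 2 ≤ (d - 1) ^ h := by
          have := Nat.le_self_pow (by omega : h ≠ 0) (d - 1)
          omega
        exact Nat.mul_le_mul_right L h1
    _ ≤ E := Nat.le_of_dvd hEpos hKdvd

end SandpileTree


open SandpileTree

/-- For `d ≥ 3` and `h ≥ 1`, with `exp(d,h)` the exponent of the sandpile group `G(d,h)`
and `η(r,s) := lcm{rⁿ − 1 : 1 ≤ n ≤ s}`, the bounds
`η(d−1, h+1) ≤ exp(d,h) ≤ d·(d−1)^h·η(d−1, h+1)` hold. -/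
theorem exponent_bounds (d h : ℕ) (hd : 3 ≤ d) (hh : 1 ≤ h) :
    ((Finset.Icc 1 (h + 1)).lcm fun n => (d - 1) ^ n - 1) ≤ AddMonoid.exponent (SG d h) ∧
    AddMonoid.exponent (SG d h) ≤
      d * (d - 1) ^ h * ((Finset.Icc 1 (h + 1)).lcm fun n => (d - 1) ^ n - 1) := by
  exact ⟨SandpileTree.lower_bound hd hh, SandpileTree.upper_bound hd hh⟩
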